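/- arXiv:1411.2800 — 5 statements merged into one kernel-verified Lean document; each statement's English description precedes it below -/
import Mathlib

section
/- Every admissible set of an argumentation framework is contained in some preferred extension. -/
variable {α : Type*}

def conflictFree (att : α → α → Prop) (T : Set α) : Prop :=
  ∀ a ∈ T, ∀ b ∈ T, ¬ att a b

def acceptable (att : α → α → Prop) (T : Set α) (a : α) : Prop :=
  ∀ b, att b a → ∃ c ∈ T, att c b

def admissible (att : α → α → Prop) (T : Set α) : Prop :=
  conflictFree att T ∧ ∀ a ∈ T, acceptable att T a

def complete (att : α → α → Prop) (T : Set α) : Prop :=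
  admissible att T ∧ ∀ a, acceptable att T a → a ∈ T

def preferred (att : α → α → Prop) (T : Set α) : Prop :=
  complete att T ∧ ∀ U, complete att U → T ⊆ U → U = T

/-! Admissible sets are closed under adding acceptable arguments and under unions of chains, so
Zorn's lemma puts every admissible set below a maximal one. A maximal admissible set is complete,
since adding an acceptable argument keeps it admissible, and it is then a maximal complete
extension because complete extensions are admissible. -/

section

variable {att : α → α → Prop}

/-- Dung's fundamental lemma. -/
lemma admissible_insert {S : Set α} {a : α} (hS : admissible att S) (ha : acceptable att S a) :
    admissible att (insert a S) := by
  obtain ⟨hcf, hacc⟩ := hS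
  constructor
  · rintro x (rfl | hx) y (rfl | hy) hatt
    · obtain ⟨c, hc, hcx⟩ := ha _ hatt
      obtain ⟨d, hd, hdc⟩ := ha c hcx
      exact hcf d hd c hc hdc
    · obtain ⟨c, hc, hca⟩ := hacc y hy _ hatt
      obtain ⟨d, hd, hdc⟩ := ha c hca
      exact hcf d hd c hc hdc
    · obtain ⟨c, hc, hcy⟩ := ha _ hatt
      exact hcf c hc x hx hcy
    · exact hcf x hx y hy hatt
  · rintro x (rfl | hx) b hatt
    · obtain ⟨c, hc, hcb⟩ := ha b hatt
      exact ⟨c, Or.inr hc, hcb⟩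
    · obtain ⟨c, hc, hcb⟩ := hacc x hx b hatt
      exact ⟨c, Or.inr hc, hcb⟩

lemma acceptable.mono {S S' : Set α} {a : α} (h : acceptable att S a) (hSS' : S ⊆ S') :
    acceptable att S' a := fun b hba =>
  let ⟨c, hc, hcb⟩ := h b hba
  ⟨c, hSS' hc, hcb⟩

lemma admissible_sUnion {c : Set (Set α)} (hchain : IsChain (· ⊆ ·) c)
    (hc : ∀ S ∈ c, admissible att S) : admissible att (⋃₀ c) := by
  constructor
  · rintro a ⟨S, hS, haS⟩ b ⟨S', hS', hbS'⟩
    obtain hSS' | hS'S := hchain.total hS hS'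
    · exact (hc S' hS').1 a (hSS' haS) b hbS'
    · exact (hc S hS).1 a haS b (hS'S hbS')
  · rintro a ⟨S, hS, haS⟩
    exact ((hc S hS).2 a haS).mono (Set.subset_sUnion_of_mem hS)

lemma exists_subset_maximal_admissible {T : Set α} (hT : admissible att T) :
    ∃ P, T ⊆ P ∧ Maximal (admissible att) P :=
  zorn_subset_nonempty {S | admissible att S}
    (fun c hc hchain _ => ⟨⋃₀ c, admissible_sUnion hchain hc, fun _ => Set.subset_sUnion_of_mem⟩)
    T hT

lemma Maximal.complete {P : Set α} (hP : Maximal (admissible att) P) : complete att P :=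
  ⟨hP.prop, fun a ha => hP.le_of_ge (admissible_insert hP.prop ha) (Set.subset_insert a P)
    (Set.mem_insert a P)⟩

lemma Maximal.preferred {P : Set α} (hP : Maximal (admissible att) P) : preferred att P :=
  ⟨hP.complete, fun _ hU hPU => (hP.eq_of_subset hU.1 hPU).symm⟩

end

theorem admissible_subset_preferred_general (att : α → α → Prop)
    (T : Set α) (hT : admissible att T) :
    ∃ P : Set α, preferred att P ∧ T ⊆ P := by
  obtain ⟨P, hTP, hP⟩ := exists_subset_maximal_admissible hT
  exact ⟨P, hP.preferred, hTP⟩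

theorem admissible_subset_preferred [Fintype α] (att : α → α → Prop)
    (T : Set α) (hT : admissible att T) :
    ∃ P : Set α, preferred att P ∧ T ⊆ P :=
  admissible_subset_preferred_general att T hT
end

section
/- If E is an admissible set of Γ = (A, R) and S is a strongly connected component of the attack digraph of Γ, then E ∩ S is an admissible set of the restriction of Γ to S \ (E \ S)⁺, where (E \ S)⁺ denotes the set of arguments attacked by E \ S. -/
variable {α : Type*}

/-- attack relation of the restriction of Γ to I -/
def restrictAtt (att : α → α → Prop) (I : Set α) (a b : α) : Prop :=
  a ∈ I ∧ b ∈ I ∧ att a b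

def isSCC (att : α → α → Prop) (S : Set α) : Prop :=
  ∃ a, S = {b | Relation.ReflTransGen att a b ∧ Relation.ReflTransGen att b a}

/-- X⁺ : set of arguments attacked by X -/
def attacked (att : α → α → Prop) (X : Set α) : Set α :=
  {b | ∃ a ∈ X, att a b}

/-! An attacker `b` of `E ∩ S` that survives the restriction is not attacked by `E \ S`, so
every defender that `E` provides against `b` lies in `S`; being in `E`, that defender is not
attacked by `E \ S` either, by conflict-freeness, so it survives the restriction too. -/

section

variable {att : α → α → Prop} {E S T X I : Set α}

theorem conflictFree.notMem_attacked (h : conflictFree att E) (hX : X ⊆ E) {a : α}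
    (ha : a ∈ E) : a ∉ attacked att X := by
  rintro ⟨c, hcX, hca⟩
  exact h c (hX hcX) a ha hca

theorem conflictFree.inter_subset_diff_attacked (h : conflictFree att E) :
    E ∩ S ⊆ S \ attacked att (E \ S) :=
  fun _ ⟨haE, haS⟩ => ⟨haS, h.notMem_attacked Set.sdiff_subset haE⟩

theorem conflictFree.restrictAtt_of_subset (h : conflictFree att E) (hT : T ⊆ E) :
    conflictFree (restrictAtt att I) T :=
  fun a ha b hb hab => h a (hT ha) b (hT hb) hab.2.2

theorem mem_of_attacks_of_notMem_attacked_diff {b c : α} (hcE : c ∈ E) (hcb : att c b)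
    (hb : b ∉ attacked att (E \ S)) : c ∈ S := by
  by_contra hcS
  exact hb ⟨c, ⟨hcE, hcS⟩, hcb⟩

theorem admissible.restrictAtt_inter (hE : admissible att E) (S : Set α) :
    admissible (restrictAtt att (S \ attacked att (E \ S))) (E ∩ S) := by
  obtain ⟨hcf, hacc⟩ := hE
  refine ⟨hcf.restrictAtt_of_subset Set.inter_subset_left, ?_⟩
  rintro a ⟨haE, -⟩ b ⟨hbI, -, hba⟩
  obtain ⟨c, hcE, hcb⟩ := hacc a haE b hba
  have hcS : c ∈ S := mem_of_attacks_of_notMem_attacked_diff hcE hcb hbI.2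
  exact ⟨c, ⟨hcE, hcS⟩, hcf.inter_subset_diff_attacked ⟨hcE, hcS⟩, hbI, hcb⟩

end

theorem admissible_inter_scc_general (att : α → α → Prop) (E S : Set α)
    (hE : admissible att E) :
    E ∩ S ⊆ S \ attacked att (E \ S) ∧
    admissible (restrictAtt att (S \ attacked att (E \ S))) (E ∩ S) :=
  ⟨hE.1.inter_subset_diff_attacked, hE.restrictAtt_inter S⟩

theorem admissible_inter_scc (att : α → α → Prop) (E S : Set α)
    (hE : admissible att E) (hS : isSCC att S) :
    E ∩ S ⊆ S \ attacked att (E \ S) ∧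
    admissible (restrictAtt att (S \ attacked att (E \ S))) (E ∩ S) :=
  admissible_inter_scc_general att E S hE
end

section
/- Let S₁ and S₂ be distinct SCCs of Γ such that neither attacks the other, and such that all attackers from outside are handled: if E₁ is admissible in Γ↓S₁ and E₂ is admissible in Γ↓S₂ and there are no attacks in R between S₁ and S₂, then E₁ ∪ E₂ is admissible in Γ↓(S₁ ∪ S₂). -/
/-! Since no attack crosses between S₁ and S₂, the framework restricted to S₁ ∪ S₂ is the disjoint
union of the frameworks restricted to S₁ and to S₂: an argument of Eᵢ ⊆ Sᵢ is attacked only from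
within Sᵢ, where Eᵢ already defends it, and E₁, E₂ cannot attack each other. -/

variable {α : Type*}

/-- admissible set of the restricted framework Γ↓I -/
def admissibleIn (att : α → α → Prop) (I E : Set α) : Prop :=
  E ⊆ I ∧ admissible (restrictAtt att I) E

def NoAttacksBetween (att : α → α → Prop) (S₁ S₂ : Set α) : Prop :=
  ∀ a b, att a b → ¬ ((a ∈ S₁ ∧ b ∈ S₂) ∨ (a ∈ S₂ ∧ b ∈ S₁))

theorem NoAttacksBetween.symm {att : α → α → Prop} {S₁ S₂ : Set α}
    (h : NoAttacksBetween att S₁ S₂) : NoAttacksBetween att S₂ S₁ :=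
  fun a b hab hmem => h a b hab hmem.symm

theorem restrictAtt_mono {att : α → α → Prop} {I J : Set α} (hIJ : I ⊆ J) {a b : α}
    (h : restrictAtt att I a b) : restrictAtt att J a b :=
  ⟨hIJ h.1, hIJ h.2.1, h.2.2⟩

theorem conflictFree_restrictAtt_iff {att : α → α → Prop} {I T : Set α} (hT : T ⊆ I) :
    conflictFree (restrictAtt att I) T ↔ conflictFree att T :=
  ⟨fun h a ha b hb hab => h a ha b hb ⟨hT ha, hT hb, hab⟩,
    fun h a ha b hb hab => h a ha b hb hab.2.2⟩

theorem conflictFree_union {att : α → α → Prop} {T₁ T₂ : Set α}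
    (h₁ : conflictFree att T₁) (h₂ : conflictFree att T₂)
    (h₁₂ : ∀ a ∈ T₁, ∀ b ∈ T₂, ¬ att a b ∧ ¬ att b a) :
    conflictFree att (T₁ ∪ T₂) := by
  rintro a (ha | ha) b (hb | hb)
  exacts [h₁ a ha b hb, (h₁₂ a ha b hb).1, (h₁₂ b hb a ha).2, h₂ a ha b hb]

theorem NoAttacksBetween.restrictAtt_of_union {att : α → α → Prop} {S₁ S₂ : Set α}
    (h : NoAttacksBetween att S₁ S₂) {a b : α} (ha : a ∈ S₁)
    (hba : restrictAtt att (S₁ ∪ S₂) b a) : restrictAtt att S₁ b a := by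
  obtain ⟨hb | hb, -, hba⟩ := hba
  · exact ⟨hb, ha, hba⟩
  · exact absurd (Or.inr ⟨hb, ha⟩) (h b a hba)

theorem NoAttacksBetween.acceptable_union {att : α → α → Prop} {S₁ S₂ E₁ E₂ : Set α}
    (h : NoAttacksBetween att S₁ S₂) {a : α} (ha : a ∈ S₁)
    (hacc : acceptable (restrictAtt att S₁) E₁ a) :
    acceptable (restrictAtt att (S₁ ∪ S₂)) (E₁ ∪ E₂) a := fun b hba => by
  obtain ⟨c, hc, hcb⟩ := hacc b (h.restrictAtt_of_union ha hba)
  exact ⟨c, Or.inl hc, restrictAtt_mono Set.subset_union_left hcb⟩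

theorem union_admissible_of_independent_sccs_general (att : α → α → Prop)
    (S₁ S₂ E₁ E₂ : Set α)
    (hnoatt : ∀ a b, att a b → ¬ ((a ∈ S₁ ∧ b ∈ S₂) ∨ (a ∈ S₂ ∧ b ∈ S₁)))
    (h₁ : admissibleIn att S₁ E₁) (h₂ : admissibleIn att S₂ E₂) :
    admissibleIn att (S₁ ∪ S₂) (E₁ ∪ E₂) := by
  have hno : NoAttacksBetween att S₁ S₂ := hnoatt
  obtain ⟨hE₁, hcf₁, hacc₁⟩ := h₁
  obtain ⟨hE₂, hcf₂, hacc₂⟩ := h₂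
  have hE : E₁ ∪ E₂ ⊆ S₁ ∪ S₂ := Set.union_subset_union hE₁ hE₂
  refine ⟨hE, ?_, ?_⟩
  · rw [conflictFree_restrictAtt_iff hE]
    rw [conflictFree_restrictAtt_iff hE₁] at hcf₁
    rw [conflictFree_restrictAtt_iff hE₂] at hcf₂
    refine conflictFree_union hcf₁ hcf₂ fun a ha b hb => ⟨?_, ?_⟩
    · exact fun hab => hno a b hab (Or.inl ⟨hE₁ ha, hE₂ hb⟩)
    · exact fun hba => hno b a hba (Or.inr ⟨hE₂ hb, hE₁ ha⟩)
  · rintro a (ha | ha)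
    · exact hno.acceptable_union (hE₁ ha) (hacc₁ a ha)
    · rw [Set.union_comm S₁, Set.union_comm E₁]
      exact hno.symm.acceptable_union (hE₂ ha) (hacc₂ a ha)

theorem union_admissible_of_independent_sccs (att : α → α → Prop)
    (S₁ S₂ E₁ E₂ : Set α)
    (hS₁ : isSCC att S₁) (hS₂ : isSCC att S₂) (hne : S₁ ≠ S₂)
    (hnoatt : ∀ a b, att a b → ¬ ((a ∈ S₁ ∧ b ∈ S₂) ∨ (a ∈ S₂ ∧ b ∈ S₁)))
    (h₁ : admissibleIn att S₁ E₁) (h₂ : admissibleIn att S₂ E₂) :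
    admissibleIn att (S₁ ∪ S₂) (E₁ ∪ E₂) :=
  union_admissible_of_independent_sccs_general att S₁ S₂ E₁ E₂ hnoatt h₁ h₂
end

section
/- If an AF Γ = (A, R) has no attacks between distinct SCCs (i.e., the attack relation never crosses SCC boundaries), then the preferred extensions of Γ are exactly the unions ⋃_S E_S where, for each SCC S, E_S is a preferred extension of Γ↓S. -/
variable {α : Type*}

def completeIn (att : α → α → Prop) (I E : Set α) : Prop :=
  admissibleIn att I E ∧ ∀ a ∈ I, acceptable (restrictAtt att I) E a → a ∈ E

def preferredIn (att : α → α → Prop) (I E : Set α) : Prop :=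
  completeIn att I E ∧ ∀ U, completeIn att I U → E ⊆ U → U = E

/-!
When attacks never leave an SCC, every attacker of `a`, and every attacker of such an attacker,
lies in the SCC of `a`. So acceptability, and with it completeness, can be checked SCC by SCC.
Maximality localises as well: a complete extension can be enlarged on a single SCC without
touching the others, and conversely an enlargement of the whole extension is an enlargement on
every SCC.
-/

open Relation

lemma Set.sdiff_union_inter_of_subset {E U S : Set α} (hUS : U ⊆ S) : (E \ S ∪ U) ∩ S = U := by
  rw [Set.union_inter_distrib_right, Set.sdiff_inter_self, Set.empty_union,
    Set.inter_eq_left.mpr hUS]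

lemma Set.sdiff_union_inter_of_disjoint {E U S T : Set α} (hUS : U ⊆ S) (hST : Disjoint S T) :
    (E \ S ∪ U) ∩ T = E ∩ T := by
  ext a
  have := Set.disjoint_left.mp hST
  simp only [Set.mem_inter_iff, Set.mem_union, Set.mem_sdiff]
  constructor
  · rintro ⟨haE | haU, haT⟩
    exacts [⟨haE.1, haT⟩, (this (hUS haU) haT).elim]
  · exact fun ⟨haE, haT⟩ => ⟨Or.inl ⟨haE, fun haS => this haS haT⟩, haT⟩

section SCC

variable (att : α → α → Prop)

def scc (a : α) : Set α :=
  {b | ReflTransGen att a b ∧ ReflTransGen att b a}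

lemma mem_scc_self (a : α) : a ∈ scc att a :=
  ⟨ReflTransGen.refl, ReflTransGen.refl⟩

lemma isSCC_scc (a : α) : isSCC att (scc att a) :=
  ⟨a, rfl⟩

variable {att}

lemma scc_eq_of_mem {a b : α} (h : b ∈ scc att a) : scc att b = scc att a := by
  ext c
  exact ⟨fun hc => ⟨h.1.trans hc.1, hc.2.trans h.2⟩, fun hc => ⟨h.2.trans hc.1, hc.2.trans h.1⟩⟩

lemma isSCC.eq_scc_of_mem {S : Set α} (hS : isSCC att S) {a : α} (ha : a ∈ S) :
    S = scc att a := by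
  obtain ⟨b, rfl⟩ := hS
  exact (scc_eq_of_mem ha).symm

lemma isSCC.disjoint_of_ne {S T : Set α} (hS : isSCC att S) (hT : isSCC att T) (hne : S ≠ T) :
    Disjoint S T :=
  Set.disjoint_left.mpr fun _ haS haT =>
    hne ((hS.eq_scc_of_mem haS).trans (hT.eq_scc_of_mem haT).symm)

lemma eq_of_forall_inter_scc_eq {E U : Set α} (h : ∀ S, isSCC att S → U ∩ S = E ∩ S) : U = E := by
  ext a
  have := congrArg (a ∈ ·) (h (scc att a) (isSCC_scc att a))
  simpa [mem_scc_self] using this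

end SCC

section AttacksWithinSCCs

variable {att : α → α → Prop}
  (hintra : ∀ a b, att a b → ReflTransGen att a b ∧ ReflTransGen att b a)
include hintra

lemma mem_scc_of_att_left {a b : α} (hab : att a b) : a ∈ scc att b :=
  (hintra a b hab).symm

lemma mem_scc_of_att_right {a b : α} (hab : att a b) : b ∈ scc att a :=
  hintra a b hab

lemma acceptable_iff_acceptable_restrictAtt_scc (T : Set α) (a : α) :
    acceptable att T a ↔ acceptable (restrictAtt att (scc att a)) (T ∩ scc att a) a := by
  constructor
  · intro h b hba
    obtain ⟨c, hcT, hcb⟩ := h b hba.2.2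
    have hbS : b ∈ scc att a := mem_scc_of_att_left hintra hba.2.2
    have hcS : c ∈ scc att a := scc_eq_of_mem hbS ▸ mem_scc_of_att_left hintra hcb
    exact ⟨c, ⟨hcT, hcS⟩, hcS, hbS, hcb⟩
  · intro h b hba
    obtain ⟨c, hc, -, -, hcb⟩ := h b ⟨mem_scc_of_att_left hintra hba, mem_scc_self att a, hba⟩
    exact ⟨c, hc.1, hcb⟩

lemma complete_iff_forall_completeIn (E : Set α) :
    complete att E ↔ ∀ S, isSCC att S → completeIn att S (E ∩ S) := by
  have hacc := acceptable_iff_acceptable_restrictAtt_scc hintra E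
  constructor
  · rintro ⟨⟨hcf, hdef⟩, hclosed⟩ S hS
    refine ⟨⟨Set.inter_subset_right, fun a ha b hb hab => hcf a ha.1 b hb.1 hab.2.2, ?_⟩, ?_⟩
    · intro a ha
      rw [hS.eq_scc_of_mem ha.2]
      exact (hacc a).mp (hdef a ha.1)
    · intro a haS ha
      rw [hS.eq_scc_of_mem haS] at ha
      exact ⟨hclosed a ((hacc a).mpr ha), haS⟩
  · intro h
    have hscc a := h (scc att a) (isSCC_scc att a)
    refine ⟨⟨?_, fun a ha => ?_⟩, fun a ha => ?_⟩
    · intro a ha b hb hab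
      have hbS := mem_scc_of_att_right hintra hab
      exact (hscc a).1.2.1 a ⟨ha, mem_scc_self att a⟩ b ⟨hb, hbS⟩ ⟨mem_scc_self att a, hbS, hab⟩
    · exact (hacc a).mpr ((hscc a).1.2.2 a ⟨ha, mem_scc_self att a⟩)
    · exact ((hscc a).2 a (mem_scc_self att a) ((hacc a).mp ha)).1

lemma complete_diff_union_of_completeIn {E U S : Set α} (hE : complete att E)
    (hS : isSCC att S) (hU : completeIn att S U) : complete att (E \ S ∪ U) := by
  rw [complete_iff_forall_completeIn hintra] at hE ⊢
  intro T hT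
  by_cases hTS : T = S
  · rwa [hTS, Set.sdiff_union_inter_of_subset hU.1.1]
  · rw [Set.sdiff_union_inter_of_disjoint hU.1.1 (hS.disjoint_of_ne hT (Ne.symm hTS))]
    exact hE T hT

lemma preferredIn_of_preferred {E S : Set α} (hE : preferred att E) (hS : isSCC att S) :
    preferredIn att S (E ∩ S) := by
  refine ⟨(complete_iff_forall_completeIn hintra E).mp hE.1 S hS, fun U hU hEU => ?_⟩
  have hE_sub : E ⊆ E \ S ∪ U :=
    (Set.sdiff_union_inter E S).symm.subset.trans (Set.union_subset_union_right _ hEU)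
  rw [← hE.2 _ (complete_diff_union_of_completeIn hintra hE.1 hS hU) hE_sub,
    Set.sdiff_union_inter_of_subset hU.1.1]

lemma preferred_of_forall_preferredIn {E : Set α}
    (h : ∀ S, isSCC att S → preferredIn att S (E ∩ S)) : preferred att E := by
  refine ⟨(complete_iff_forall_completeIn hintra E).mpr fun S hS => (h S hS).1, fun U hU hEU => ?_⟩
  refine eq_of_forall_inter_scc_eq fun S hS => (h S hS).2 _ ?_ (Set.inter_subset_inter_left S hEU)
  exact (complete_iff_forall_completeIn hintra U).mp hU S hS

end AttacksWithinSCCs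

theorem preferred_iff_sccwise_preferred_general (att : α → α → Prop)
    (hintra : ∀ a b, att a b →
      Relation.ReflTransGen att a b ∧ Relation.ReflTransGen att b a)
    (E : Set α) :
    preferred att E ↔ ∀ S : Set α, isSCC att S → preferredIn att S (E ∩ S) :=
  ⟨fun hE _ hS => preferredIn_of_preferred hintra hE hS, preferred_of_forall_preferredIn hintra⟩

theorem preferred_iff_sccwise_preferred [Fintype α] (att : α → α → Prop)
    (hintra : ∀ a b, att a b →
      Relation.ReflTransGen att a b ∧ Relation.ReflTransGen att b a)
    (E : Set α) :
    preferred att E ↔ ∀ S : Set α, isSCC att S → preferredIn att S (E ∩ S) :=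
  preferred_iff_sccwise_preferred_general att hintra E
end

section
/- If an AF is acyclic (its attack digraph has no directed cycles), then it has a unique complete extension, which is therefore simultaneously the grounded and the unique preferred extension. -/
/-!
Finiteness and acyclicity make the attack relation well-founded. Then any set defending all of its
members lies inside every complete extension, by well-founded induction along the transitive
closure of the attack relation: a defender `c` of `a ∈ T` against an attacker `b` satisfies
`c → b → a`. Conversely, well-founded recursion defines the set of arguments none of whose
attackers belong to it, and this set is complete. So there is exactly one complete extension, and
it is both the least and the only maximal one.
-/

variable {α : Type*}

section WellFoundedAttack

variable {att : α → α → Prop}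

theorem wellFounded_of_not_transGen_self [Finite α] (h : ∀ a, ¬ Relation.TransGen att a a) :
    WellFounded att :=
  have : IsTrans α (Relation.TransGen att) := ⟨fun _ _ _ => Relation.TransGen.trans⟩
  have : Std.Irrefl (Relation.TransGen att) := ⟨h⟩
  Subrelation.wf Relation.TransGen.single (Finite.wellFounded_of_trans_of_irrefl _)

theorem subset_of_forall_acceptable (wf : WellFounded att) {T U : Set α}
    (hT : ∀ a ∈ T, acceptable att T a) (hU : complete att U) : T ⊆ U := by
  intro a
  induction a using wf.transGen.induction with
  | _ a ih =>
    intro haT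
    refine hU.2 a fun b hba => ?_
    obtain ⟨c, hcT, hcb⟩ := hT a haT b hba
    exact ⟨c, ih c (.head hcb (.single hba)) hcT, hcb⟩

theorem complete_subset_of_wellFounded (wf : WellFounded att) {T U : Set α}
    (hT : complete att T) (hU : complete att U) : T ⊆ U :=
  subset_of_forall_acceptable wf hT.1.2 hU

def groundedOfWellFounded (wf : WellFounded att) : Set α :=
  wf.fix fun a unattacked => ∀ b (hba : att b a), ¬ unattacked b hba

theorem mem_groundedOfWellFounded_iff (wf : WellFounded att) {a : α} :
    a ∈ groundedOfWellFounded wf ↔ ∀ b, att b a → b ∉ groundedOfWellFounded wf := by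
  unfold groundedOfWellFounded
  exact iff_of_eq (wf.fix_eq _ a)

theorem complete_groundedOfWellFounded (wf : WellFounded att) :
    complete att (groundedOfWellFounded wf) := by
  set G := groundedOfWellFounded wf
  have hG : ∀ {a}, a ∈ G ↔ ∀ b, att b a → b ∉ G := mem_groundedOfWellFounded_iff wf
  refine ⟨⟨fun a ha b hb hab => hG.1 hb a hab ha, fun a ha b hba => ?_⟩, fun a ha => ?_⟩
  · have hbG : b ∉ G := hG.1 ha b hba
    rw [hG] at hbG
    obtain ⟨c, hcb, hcG⟩ : ∃ c, att c b ∧ c ∈ G := by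
      simpa only [not_forall, not_not, exists_prop] using hbG
    exact ⟨c, hcG, hcb⟩
  · refine hG.2 fun b hba hbG => ?_
    obtain ⟨c, hcG, hcb⟩ := ha b hba
    exact hG.1 hbG c hcb hcG

end WellFoundedAttack

theorem acyclic_unique_complete [Fintype α] (att : α → α → Prop)
    (hacyclic : ∀ a : α, ¬ Relation.TransGen att a a) :
    (∃! T : Set α, complete att T) ∧
    ∀ T : Set α, complete att T →
      preferred att T ∧ ∀ U, complete att U → T ⊆ U := by
  have wf := wellFounded_of_not_transGen_self hacyclic
  have hsub {T U : Set α} : complete att T → complete att U → T ⊆ U :=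
    complete_subset_of_wellFounded wf
  have hG := complete_groundedOfWellFounded wf
  refine ⟨⟨_, hG, fun T hT => (hsub hT hG).antisymm (hsub hG hT)⟩, fun T hT => ?_⟩
  exact ⟨⟨hT, fun U hU hTU => (hsub hU hT).antisymm hTU⟩, fun U hU => hsub hT hU⟩
end
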